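/- For positive definite Q and positive semidefinite symmetric matrices Λ_b, Λ_u (all n×n) with Λ_b + Λ_u invertible, and any n×k matrix A, the matrix Aᵀ Q⁻¹ (Q⁻¹ + Λ_b + Λ_u)⁻¹ (Λ_b + Λ_u) A is symmetric positive semidefinite. -/

import Mathlib

/-!
With `Λ := Λb + Λu` positive semidefinite and invertible, hence positive definite,
`Q⁻¹ (Q⁻¹ + Λ)⁻¹ Λ = (Λ⁻¹ + Q)⁻¹` is the inverse of a positive definite matrix, and the
congruence `Aᵀ (Λ⁻¹ + Q)⁻¹ A` of a positive definite matrix is positive semidefinite.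
-/

open Matrix

namespace Matrix

variable {m R : Type*} [Fintype m] [DecidableEq m] [CommRing R]

theorem inv_mul_inv_add_mul_eq_inv_inv_add {Q Λ : Matrix m m R} (hQ : IsUnit Q)
    (hΛ : IsUnit Λ) : Q⁻¹ * (Q⁻¹ + Λ)⁻¹ * Λ = (Λ⁻¹ + Q)⁻¹ := by
  have h := inv_add_inv (A := Λ) (B := Q⁻¹) (by simp [isUnit_nonsing_inv_iff, hΛ, hQ])
  rw [nonsing_inv_nonsing_inv _ ((isUnit_iff_isUnit_det Q).mp hQ)] at h
  rw [h, mul_inv_rev, mul_inv_rev,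
    nonsing_inv_nonsing_inv _ ((isUnit_iff_isUnit_det Λ).mp hΛ), add_comm, Matrix.mul_assoc]

end Matrix

theorem backward_precision_psd {n k : ℕ}
    (Q Λb Λu : Matrix (Fin n) (Fin n) ℝ) (A : Matrix (Fin n) (Fin k) ℝ)
    (hQ : Q.PosDef) (hb : Λb.PosSemidef) (hu : Λu.PosSemidef)
    (hinv : IsUnit (Λb + Λu)) :
    (Aᵀ * Q⁻¹ * (Q⁻¹ + Λb + Λu)⁻¹ * (Λb + Λu) * A).PosSemidef := by
  have hΛ : (Λb + Λu).PosDef := (hb.add hu).posDef_iff_isUnit.mpr hinv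
  rw [add_assoc, Matrix.mul_assoc Aᵀ, Matrix.mul_assoc Aᵀ,
    inv_mul_inv_add_mul_eq_inv_inv_add hQ.isUnit hinv, ← conjTranspose_eq_transpose_of_trivial]
  exact (hΛ.inv.add_posSemidef hQ.posSemidef).inv.posSemidef.conjTranspose_mul_mul_same A
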